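/- arXiv:math/0205003 — 2 statements merged into one kernel-verified Lean document; each statement's English description precedes it below -/
import Mathlib

section
/- For every x > 0, the series f_ε(x) = Σ_{a=1}^∞ μ(a)/a^ε · ρ(1/(a x)) converges, and equals 1/(x ζ(1+ε)) − Σ_{a ≤ 1/x} μ(a)/a^ε · ⌊1/(a x)⌋, for every ε > 0. -/
open Complex Filter ArithmeticFunction

/-!
Writing `ρ(y) = y - ⌊y⌋`, the `a`-th term splits as
`μ(a)/(x a^{1+ε}) - μ(a)/a^ε · ⌊1/(a x)⌋`.
The first part is `1/x` times the Dirichlet series of `μ`, absolutely convergent at `1 + ε`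
with sum `1/ζ(1+ε)`; the second has only finitely many nonzero terms, since `⌊1/(a x)⌋ = 0`
as soon as `a > 1/x`.
-/

lemma Finset.sum_Icc_one_eq_sum_range_succ {M : Type*} [AddCommMonoid M] {f : ℕ → M}
    (hf : f 0 = 0) (n : ℕ) :
    ∑ a ∈ Finset.Icc 1 n, f a = ∑ a ∈ Finset.range (n + 1), f a := by
  rw [Finset.range_eq_Ico, Finset.sum_eq_sum_Ico_succ_bot n.succ_pos, hf, zero_add]
  rfl

lemma HasSum.tendsto_sum_Icc_one {M : Type*} [AddCommMonoid M] [TopologicalSpace M]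
    {f : ℕ → M} {m : M} (h : HasSum f m) (hf : f 0 = 0) :
    Tendsto (fun n => ∑ a ∈ Finset.Icc 1 n, f a) atTop (nhds m) := by
  simpa only [Finset.sum_Icc_one_eq_sum_range_succ hf, Function.comp_def] using
    h.tendsto_sum_nat.comp (tendsto_add_atTop_nat 1)

lemma LSeriesHasSum_moebius {s : ℂ} (hs : 1 < s.re) :
    LSeriesHasSum (fun n => (moebius n : ℂ)) s (riemannZeta s)⁻¹ := by
  have hL : LSeries (fun n => (moebius n : ℂ)) s = (riemannZeta s)⁻¹ := by
    rw [← LSeries_one_eq_riemannZeta hs]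
    exact eq_inv_of_mul_eq_one_right (LSeries_one_mul_Lseries_moebius hs)
  exact hL ▸ (LSeriesSummable_moebius_iff.mpr hs).LSeriesHasSum

lemma Int.floor_one_div_mul_eq_zero {x : ℝ} (hx : 0 < x) {a : ℕ} (ha : ⌊1 / x⌋₊ < a) :
    ⌊1 / (a * x)⌋ = 0 := by
  have hax : 1 < (a : ℝ) * x := by
    rw [Nat.floor_lt (by positivity), div_lt_iff₀ hx] at ha
    exact ha
  exact Int.floor_eq_zero_iff.mpr ⟨by positivity, (div_lt_one (by positivity)).mpr hax⟩

lemma hasSum_mul_floor_one_div_mul {x : ℝ} (hx : 0 < x) {c : ℕ → ℂ} (hc : c 0 = 0) :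
    HasSum (fun a : ℕ => c a * ((⌊1 / (a * x)⌋ : ℤ) : ℂ))
      (∑ a ∈ Finset.Icc 1 ⌊1 / x⌋₊, c a * ((⌊1 / (a * x)⌋ : ℤ) : ℂ)) := by
  refine hasSum_sum_of_ne_finset_zero fun a ha => ?_
  rcases Nat.eq_zero_or_pos a with rfl | ha_pos
  · rw [hc, zero_mul]
  · have ha_large : ⌊1 / x⌋₊ < a := by
      simp only [Finset.mem_Icc, not_and, not_le] at ha
      exact ha ha_pos
    rw [Int.floor_one_div_mul_eq_zero hx ha_large, Int.cast_zero, mul_zero]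

lemma moebius_div_cpow_mul_fract (x ε : ℝ) (a : ℕ) :
    (moebius a : ℂ) / (a : ℂ) ^ (ε : ℂ) * (Int.fract (1 / (a * x)) : ℝ) =
      1 / (x : ℂ) * LSeries.term (fun n => (moebius n : ℂ)) (1 + ε) a -
        (moebius a : ℂ) / (a : ℂ) ^ (ε : ℂ) * ((⌊1 / (a * x)⌋ : ℤ) : ℂ) := by
  rcases eq_or_ne a 0 with rfl | ha
  · simp
  have haC : (a : ℂ) ≠ 0 := Nat.cast_ne_zero.mpr ha
  rw [LSeries.term_of_ne_zero ha, cpow_add _ _ haC, cpow_one, Int.fract]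
  push_cast
  field_simp

/-- For every `x > 0` and `ε > 0`, the series
`Σ_{a=1}^∞ μ(a)/a^ε · ρ(1/(a x))` converges and equals
`1/(x ζ(1+ε)) − Σ_{a ≤ 1/x} μ(a)/a^ε · ⌊1/(a x)⌋`. -/
theorem stmt_0 (x : ℝ) (hx : 0 < x) (ε : ℝ) (hε : 0 < ε) :
    Tendsto (fun n : ℕ =>
        ∑ a ∈ Finset.Icc 1 n,
          ((moebius a : ℂ) / (a : ℂ) ^ (ε : ℂ)) * (Int.fract (1 / (a * x)) : ℝ))
      atTop
      (nhds (1 / (x * riemannZeta (1 + ε)) -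
        ∑ a ∈ Finset.Icc 1 ⌊1 / x⌋₊,
          ((moebius a : ℂ) / (a : ℂ) ^ (ε : ℂ)) * ((⌊1 / (a * x)⌋ : ℤ) : ℂ))) := by
  have hDirichlet : HasSum
      (fun a => 1 / (x : ℂ) * LSeries.term (fun n => (moebius n : ℂ)) (1 + ε) a)
      (1 / (x * riemannZeta (1 + ε))) := by
    simpa only [one_div, mul_inv] using
      (LSeriesHasSum_moebius (s := 1 + ε) (by simpa using hε)).mul_left (1 / (x : ℂ))
  have hFloor := hasSum_mul_floor_one_div_mul hx
    (c := fun a => (moebius a : ℂ) / (a : ℂ) ^ (ε : ℂ)) (by simp)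
  simp only [moebius_div_cpow_mul_fract x ε]
  exact (hDirichlet.sub hFloor).tendsto_sum_Icc_one (by simp)
end

section
/- Let 0 < ε < 1/2 and n ≥ 1. Define f_{2ε,n}(x) = Σ_{a=1}^n μ(a) a^{−2ε} ρ(1/(a x)) and X_ε(x) = x^{−ε}. Then for all real τ, ∫_0^∞ x^{−1/2 + iτ} X_ε(x) f_{2ε,n}(x) dx = −(ζ(1/2 − ε + iτ)/(1/2 − ε + iτ)) · Σ_{a=1}^n μ(a) a^{−(1/2 + ε + iτ)}. -/
/-!
For `Re s > 1`, Abel summation of `ζ(s) = ∑ n⁻ˢ` together with `⌊t⌋ = t - {t}` gives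
`ζ(s) = s/(s-1) - s ∫_1^∞ {t} t^(-s-1) dt`. The integral is holomorphic on `Re s > 0`, and so is
`(s-1) ζ(s)`, so by the identity theorem the formula persists on `Re s > 0`. For `0 < Re s < 1`,
adding `∫_0^1 t^(-s) dt = 1/(1-s)` gives `∫_0^∞ {t} t^(-s-1) dt = -ζ(s)/s`, and the substitution
`t = 1/(a x)` turns this into `∫_0^∞ x^(s-1) {1/(a x)} dx = -a^(-s) ζ(s)/s`. The theorem is the
linear combination of these identities at `s = 1/2 - ε + iτ` with coefficients `μ(a) a^(-2ε)`.
-/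

open Complex MeasureTheory ArithmeticFunction
open Set Filter Asymptotics
open scoped Topology

section Mellin

variable {E : Type*} [NormedAddCommGroup E] [NormedSpace ℂ E]

theorem HasMellin.congr_ae {f g : ℝ → E} {s : ℂ} {m : E} (hf : HasMellin f s m)
    (hfg : f =ᵐ[volume.restrict (Ioi 0)] g) : HasMellin g s m := by
  have h : (fun t : ℝ => (t : ℂ) ^ (s - 1) • f t) =ᵐ[volume.restrict (Ioi 0)]
      fun t => (t : ℂ) ^ (s - 1) • g t := by
    filter_upwards [hfg] with t ht using by rw [ht]
  exact ⟨hf.1.congr h, (integral_congr_ae h).symm.trans hf.2⟩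

theorem hasMellin_sum {ι : Type*} (u : Finset ι) {f : ι → ℝ → E} {s : ℂ} {m : ι → E}
    (h : ∀ i ∈ u, HasMellin (f i) s (m i)) :
    HasMellin (fun t => ∑ i ∈ u, f i t) s (∑ i ∈ u, m i) := by
  classical
  induction u using Finset.induction_on with
  | empty => simp [HasMellin, MellinConvergent, mellin]
  | insert i u hi ih =>
    have hi' := h i (Finset.mem_insert_self i u)
    have hu := ih fun j hj => h j (Finset.mem_insert_of_mem hj)
    simp only [Finset.sum_insert hi]
    have := hasMellin_add hi'.1 hu.1
    rwa [hi'.2, hu.2] at this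

theorem HasMellin.comp_inv {f : ℝ → E} {s : ℂ} {m : E} (hf : HasMellin f (-s) m) :
    HasMellin (fun t => f t⁻¹) s m := by
  refine ⟨?_, (mellin_comp_inv f s).trans hf.2⟩
  simpa [Real.rpow_neg_one, div_neg] using
    (MellinConvergent.comp_rpow (f := f) (s := s) (a := -1) (by norm_num)).mpr
      (by simpa [div_neg] using hf.1)

theorem HasMellin.comp_mul_left {f : ℝ → E} {s : ℂ} {m : E} (hf : HasMellin f s m) {a : ℝ}
    (ha : 0 < a) : HasMellin (fun t => f (a * t)) s ((a : ℂ) ^ (-s) • m) :=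
  ⟨(MellinConvergent.comp_mul_left ha).mpr hf.1, hf.2 ▸ mellin_comp_mul_left f s ha⟩

theorem mellin_indicator_Ioi {f : ℝ → E} {c : ℝ} (hc : 0 ≤ c) (s : ℂ) :
    mellin ((Ioi c).indicator f) s = ∫ t in Ioi c, (t : ℂ) ^ (s - 1) • f t := by
  rw [mellin, ← indicator_smul (Ioi c) (fun t : ℝ => (t : ℂ) ^ (s - 1)) f,
    integral_indicator measurableSet_Ioi, Measure.restrict_restrict_of_subset (Ioi_subset_Ioi hc)]

theorem mellinConvergent_indicator_Ioi_iff {f : ℝ → E} {c : ℝ} (hc : 0 ≤ c) {s : ℂ} :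
    MellinConvergent ((Ioi c).indicator f) s ↔
      IntegrableOn (fun t : ℝ => (t : ℂ) ^ (s - 1) • f t) (Ioi c) := by
  rw [MellinConvergent, ← indicator_smul (Ioi c) (fun t : ℝ => (t : ℂ) ^ (s - 1)) f, IntegrableOn,
    integrable_indicator_iff measurableSet_Ioi, IntegrableOn,
    Measure.restrict_restrict_of_subset (Ioi_subset_Ioi hc)]
  rfl

end Mellin

noncomputable def fractTail : ℝ → ℂ := (Ioi (1 : ℝ)).indicator fun t => ((Int.fract t : ℝ) : ℂ)

theorem norm_fractTail_le_one (t : ℝ) : ‖fractTail t‖ ≤ 1 := by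
  unfold fractTail
  by_cases ht : t ∈ Ioi (1 : ℝ)
  · rw [indicator_of_mem ht, norm_real, Real.norm_of_nonneg (Int.fract_nonneg t)]
    exact (Int.fract_lt_one t).le
  · simp [indicator_of_notMem ht]

theorem locallyIntegrableOn_fractTail : LocallyIntegrableOn fractTail (Ioi 0) := by
  refine (locallyIntegrable_iff (f := fractTail).mpr fun K hK => ?_).locallyIntegrableOn _
  exact IntegrableOn.of_bound hK.measure_lt_top
    ((measurable_ofReal.comp measurable_fract).indicator measurableSet_Ioi).aestronglyMeasurable 1
    (Eventually.of_forall norm_fractTail_le_one)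

theorem fractTail_isBigO_atTop : fractTail =O[atTop] (· ^ (-(0 : ℝ))) :=
  .of_bound 1 (Eventually.of_forall fun t => by simpa using norm_fractTail_le_one t)

theorem fractTail_isBigO_nhdsGT_zero (b : ℝ) : fractTail =O[𝓝[>] 0] (· ^ (-b)) := by
  refine EventuallyEq.trans_isBigO ?_ (isBigO_zero _ _)
  filter_upwards [nhdsWithin_le_nhds (Iio_mem_nhds zero_lt_one)] with t ht
  exact indicator_of_notMem (not_lt.mpr (le_of_lt ht)) _

theorem mellinConvergent_fractTail {s : ℂ} (hs : s.re < 0) : MellinConvergent fractTail s :=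
  mellinConvergent_of_isBigO_rpow locallyIntegrableOn_fractTail fractTail_isBigO_atTop hs
    (fractTail_isBigO_nhdsGT_zero (s.re - 1)) (sub_one_lt _)

theorem differentiableAt_mellin_fractTail {s : ℂ} (hs : s.re < 0) :
    DifferentiableAt ℂ (mellin fractTail) s :=
  mellin_differentiableAt_of_isBigO_rpow locallyIntegrableOn_fractTail fractTail_isBigO_atTop hs
    (fractTail_isBigO_nhdsGT_zero (s.re - 1)) (sub_one_lt _)

theorem riemannZeta_eq_sub_mul_mellin_fractTail_of_one_lt_re {s : ℂ} (hs : 1 < s.re) :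
    riemannZeta s = s / (s - 1) - s * mellin fractTail (-s) := by
  have hs1 : s - 1 ≠ 0 := sub_ne_zero.mpr (by rintro rfl; simp at hs)
  have hO : (fun n : ℕ => ∑ k ∈ Finset.Icc 1 n, ‖(1 : ℕ → ℂ) k‖) =O[atTop]
      fun n : ℕ => (n : ℝ) ^ (1 : ℝ) := by
    simpa using isBigO_refl (fun n : ℕ => (n : ℝ)) atTop
  have hfloor : ∀ t ∈ Ioi (1 : ℝ),
      (∑ k ∈ Finset.Icc 1 ⌊t⌋₊, (1 : ℕ → ℂ) k) * (t : ℂ) ^ (-(s + 1)) =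
        (t : ℂ) ^ (-s) - (t : ℂ) ^ (-s - 1) * Int.fract t := by
    intro t ht
    have ht0 : (t : ℂ) ≠ 0 := ofReal_ne_zero.mpr (zero_lt_one.trans ht).ne'
    have hfl : (⌊t⌋₊ : ℂ) = t - Int.fract t := by
      have : (⌊t⌋₊ : ℝ) = t - Int.fract t := by
        rw [Int.self_sub_fract, natCast_floor_eq_intCast_floor (zero_le_one.trans ht.le)]
      exact_mod_cast congrArg ((↑) : ℝ → ℂ) this
    simp only [Pi.one_apply, Finset.sum_const, Nat.card_Icc, add_tsub_cancel_right, nsmul_eq_mul,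
      mul_one, hfl]
    rw [neg_add', cpow_sub _ _ ht0, cpow_one]
    field_simp
  have htail : mellin fractTail (-s) = ∫ t in Ioi (1 : ℝ), (t : ℂ) ^ (-s - 1) * Int.fract t :=
    mellin_indicator_Ioi zero_le_one (-s)
  have htail_int : IntegrableOn (fun t : ℝ => (t : ℂ) ^ (-s - 1) * Int.fract t) (Ioi 1) :=
    (mellinConvergent_indicator_Ioi_iff zero_le_one).mp
      (mellinConvergent_fractTail (by simpa using zero_lt_one.trans hs))
  rw [← LSeries_one_eq_riemannZeta hs, LSeries_eq_mul_integral' _ zero_le_one hs hO,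
    setIntegral_congr_fun measurableSet_Ioi hfloor,
    integral_sub (integrableOn_Ioi_cpow_of_lt (by simpa using hs) zero_lt_one) htail_int,
    integral_Ioi_cpow_of_lt (by simpa using hs) zero_lt_one, htail,
    ofReal_one, one_cpow, neg_add_eq_sub, ← neg_sub s 1]
  field_simp

theorem riemannZeta₁_eq_sub_one_mul {s : ℂ} (hs : s ≠ 1) :
    riemannZeta₁ s = (s - 1) * riemannZeta s := by
  rw [riemannZeta_eq_inv_sub_mul hs, mul_inv_cancel_left₀ (sub_ne_zero.mpr hs)]

theorem riemannZeta_eq_sub_mul_mellin_fractTail {s : ℂ} (hs0 : 0 < s.re) (hs1 : s ≠ 1) :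
    riemannZeta s = s / (s - 1) - s * mellin fractTail (-s) := by
  set U : Set ℂ := {s | 0 < s.re}
  have hU : IsOpen U := isOpen_lt continuous_const continuous_re
  have hM : AnalyticOnNhd ℂ (fun s => s * (s - 1) * mellin fractTail (-s)) U := by
    refine DifferentiableOn.analyticOnNhd (fun s hs => ?_) hU
    have := (differentiableAt_mellin_fractTail (s := -s) (by simpa using hs.out)).comp s
      differentiableAt_id.neg
    exact (by fun_prop : DifferentiableAt ℂ (fun s : ℂ => s * (s - 1)) s).mul this
      |>.differentiableWithinAt
  have hZ : AnalyticOnNhd ℂ (fun s => s - riemannZeta₁ s) U :=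
    (by fun_prop : Differentiable ℂ fun s => s - riemannZeta₁ s).differentiableOn.analyticOnNhd hU
  have hnear_two : (fun s => s * (s - 1) * mellin fractTail (-s)) =ᶠ[𝓝 2]
      fun s => s - riemannZeta₁ s := by
    filter_upwards [(isOpen_lt continuous_const continuous_re).mem_nhds
      (show (1 : ℝ) < (2 : ℂ).re by simp)] with s hs
    have hs1 : s ≠ 1 := by rintro rfl; simp at hs
    rw [riemannZeta₁_eq_sub_one_mul hs1,
      riemannZeta_eq_sub_mul_mellin_fractTail_of_one_lt_re hs]
    field_simp [sub_ne_zero.mpr hs1]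
    ring
  have := hM.eqOn_of_preconnected_of_eventuallyEq hZ (convex_halfSpace_re_gt 0).isPreconnected
    (show (0 : ℝ) < (2 : ℂ).re by simp) hnear_two hs0
  simp only [riemannZeta₁_eq_sub_one_mul hs1] at this
  rw [eq_sub_iff_add_eq, eq_div_iff (sub_ne_zero.mpr hs1)]
  linear_combination this

theorem fract_ae_eq_indicator_add_fractTail :
    (fun t : ℝ => (Ioc 0 1).indicator (fun t : ℝ => (t : ℂ) ^ (1 : ℂ)) t + fractTail t)
      =ᵐ[volume.restrict (Ioi 0)] fun t => ((Int.fract t : ℝ) : ℂ) := by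
  filter_upwards [ae_restrict_mem measurableSet_Ioi, ae_restrict_of_ae (volume.ae_ne 1)]
    with t (ht0 : 0 < t) ht1
  rcases ht1.lt_or_gt with ht1 | ht1
  · simp [fractTail, ht0, ht1.le, not_lt.mpr ht1.le, Int.fract_eq_self.mpr ⟨ht0.le, ht1⟩]
  · simp [fractTail, ht1, not_le.mpr ht1]

theorem hasMellin_fract {s : ℂ} (hs0 : 0 < s.re) (hs1 : s.re < 1) :
    HasMellin (fun t : ℝ => ((Int.fract t : ℝ) : ℂ)) (-s) (-(riemannZeta s / s)) := by
  have hs : s ≠ 0 := by rintro rfl; simp at hs0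
  have hs' : s ≠ 1 := by rintro rfl; simp at hs1
  have hpow := hasMellin_cpow_Ioc 1 (s := -s) (by simpa using hs1)
  have hsum := hasMellin_add hpow.1 (mellinConvergent_fractTail (by simpa using hs0))
  rw [hpow.2] at hsum
  have hval : 1 / (-s + 1) + mellin fractTail (-s) = -(riemannZeta s / s) := by
    rw [riemannZeta_eq_sub_mul_mellin_fractTail hs0 hs', neg_add_eq_sub, ← neg_sub s 1]
    field_simp [sub_ne_zero.mpr hs']
    ring
  exact hval ▸ hsum.congr_ae fract_ae_eq_indicator_add_fractTail

theorem hasMellin_fract_one_div_mul {a : ℝ} (ha : 0 < a) {s : ℂ} (hs0 : 0 < s.re)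
    (hs1 : s.re < 1) :
    HasMellin (fun x : ℝ => ((Int.fract (1 / (a * x)) : ℝ) : ℂ)) s
      (-(a : ℂ) ^ (-s) * riemannZeta s / s) := by
  have := ((hasMellin_fract hs0 hs1).comp_inv).comp_mul_left ha
  simp only [one_div]
  convert this using 1
  rw [smul_eq_mul]
  ring

theorem hasMellin_sum_mul_fract_one_div_mul {u : Finset ℕ} (hu : ∀ a ∈ u, 0 < a) (c : ℕ → ℂ)
    {s : ℂ} (hs0 : 0 < s.re) (hs1 : s.re < 1) :
    HasMellin (fun x : ℝ => ∑ a ∈ u, c a * ((Int.fract (1 / (a * x)) : ℝ) : ℂ)) s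
      (-(riemannZeta s / s) * ∑ a ∈ u, c a * (a : ℂ) ^ (-s)) := by
  rw [Finset.mul_sum]
  refine hasMellin_sum u fun a ha => ?_
  have h := hasMellin_fract_one_div_mul (Nat.cast_pos.mpr (hu a ha)) hs0 hs1
  convert hasMellin_const_smul h.1 (c a) using 1
  · simp only [smul_eq_mul]
  · rw [h.2, smul_eq_mul, ofReal_natCast]
    ring

theorem stmt_6_general (ε : ℝ) (hε : 0 < ε) (hε' : ε < 1 / 2) (n : ℕ) (τ : ℝ) :
    ∫ x in Set.Ioi (0 : ℝ),
        (x : ℂ) ^ (-(1 / 2 : ℂ) + I * τ) * ((x ^ (-ε) : ℝ) : ℂ) *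
          (∑ a ∈ Finset.Icc 1 n,
            (moebius a : ℝ) * (a : ℝ) ^ (-(2 * ε)) * Int.fract (1 / (a * x)) : ℝ) =
      -(riemannZeta (1 / 2 - ε + I * τ) / (1 / 2 - ε + I * τ)) *
        ∑ a ∈ Finset.Icc 1 n, (moebius a : ℂ) * (a : ℂ) ^ (-(1 / 2 + ε + I * τ)) := by
  set w : ℂ := 1 / 2 - ε + I * τ with hw_def
  have hw_re : w.re = 1 / 2 - ε := by simp [w]
  set c : ℕ → ℂ := fun a => ((moebius a * (a : ℝ) ^ (-(2 * ε)) : ℝ) : ℂ)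
  have hintegrand : ∀ x ∈ Ioi (0 : ℝ),
      (x : ℂ) ^ (-(1 / 2 : ℂ) + I * τ) * ((x ^ (-ε) : ℝ) : ℂ) *
          ((∑ a ∈ Finset.Icc 1 n,
            (moebius a : ℝ) * (a : ℝ) ^ (-(2 * ε)) * Int.fract (1 / (a * x)) : ℝ) : ℂ) =
        (x : ℂ) ^ (w - 1) • ∑ a ∈ Finset.Icc 1 n, c a * ((Int.fract (1 / (a * x)) : ℝ) : ℂ) := by
    intro x (hx : 0 < x)
    have hexp : -(1 / 2 : ℂ) + I * τ + ((-ε : ℝ) : ℂ) = w - 1 := by rw [hw_def]; push_cast; ring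
    rw [ofReal_cpow hx.le, ← cpow_add _ _ (ofReal_ne_zero.mpr hx.ne'), hexp, smul_eq_mul,
      ofReal_sum]
    congr 1
    refine Finset.sum_congr rfl fun a _ => ?_
    push_cast [c]
    ring
  have hcoeff : ∀ a ∈ Finset.Icc 1 n,
      c a * (a : ℂ) ^ (-w) = moebius a * (a : ℂ) ^ (-(1 / 2 + ε + I * τ)) := by
    intro a ha
    have ha0 : (a : ℂ) ≠ 0 :=
      Nat.cast_ne_zero.mpr (Nat.one_le_iff_ne_zero.mp (Finset.mem_Icc.mp ha).1)
    simp only [c, ofReal_mul, ofReal_cpow (Nat.cast_nonneg a), ofReal_natCast, ofReal_intCast,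
      mul_assoc, ← cpow_add _ _ ha0, hw_def]
    congr 2
    push_cast
    ring
  have hM := hasMellin_sum_mul_fract_one_div_mul (u := Finset.Icc 1 n)
    (fun a ha => (Finset.mem_Icc.mp ha).1) c (s := w) (by linarith) (by linarith)
  rw [setIntegral_congr_fun measurableSet_Ioi hintegrand, ← mellin, hM.2,
    Finset.sum_congr rfl hcoeff]

/-- Mellin transform on the critical line of `X_ε · f_{2ε,n}`:
`∫_0^∞ x^{−1/2+iτ} x^{−ε} f_{2ε,n}(x) dx
  = −(ζ(1/2−ε+iτ)/(1/2−ε+iτ)) Σ_{a=1}^n μ(a) a^{−(1/2+ε+iτ)}`. -/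
theorem stmt_6 (ε : ℝ) (hε : 0 < ε) (hε' : ε < 1 / 2) (n : ℕ) (hn : 1 ≤ n) (τ : ℝ) :
    ∫ x in Set.Ioi (0 : ℝ),
        (x : ℂ) ^ (-(1 / 2 : ℂ) + I * τ) * ((x ^ (-ε) : ℝ) : ℂ) *
          (∑ a ∈ Finset.Icc 1 n,
            (moebius a : ℝ) * (a : ℝ) ^ (-(2 * ε)) * Int.fract (1 / (a * x)) : ℝ) =
      -(riemannZeta (1 / 2 - ε + I * τ) / (1 / 2 - ε + I * τ)) *
        ∑ a ∈ Finset.Icc 1 n, (moebius a : ℂ) * (a : ℂ) ^ (-(1 / 2 + ε + I * τ)) :=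
  stmt_6_general ε hε hε' n τ
end
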